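/- The expected number of vertices of degree at most k in G ~ SBM(n, α log n / n, β log n / n), restricted to the event that both communities have size between n/2 − n^{3/4} and n/2 + n^{3/4}, is at most 2(k+1)²(γ log n / 2)^k · n^{1−(α+β)/2+o(1)}, where γ = max{α, β}. -/

import Mathlib

/-!
Condition on the labels `ℓ`. Given `ℓ`, the indicators of the pairs `i < j` are independent
Bernoulli variables, so the degree of a vertex `i` is a sum of `n - 1` independent Bernoulli
variables with parameters `r_j ≤ γ`. Summing over the at most `(n - 1)^s` possible neighbourhoods
of each size `s ≤ k` and using `1 - x ≤ exp (-x)` gives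
`P(deg i ≤ k) ≤ (k + 1) (n γ)^k exp (k γ - ∑_j r_j)`. On the balance event both communities have
at least `n/2 - n^{3/4}` vertices, so `∑_j r_j ≥ (p + q)(n/2 - n^{3/4}) - p`, and the bound is
`(γ log n)^k n^{-(α+β)/2 + o(1)}` per vertex.
-/

open MeasureTheory Finset

/-- `sbmLaw ℙ n p q σ X`: under `ℙ`, the labels `σ` and adjacency indicators `X` are
distributed as `SBM(n, p, q)`. -/
def sbmLaw {Ω : Type} [MeasurableSpace Ω] (ℙ : Measure Ω) (n : ℕ) (p q : ℝ)
    (σ : Ω → Fin n → Bool) (X : Ω → Fin n → Fin n → Bool) : Prop :=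
  ℙ {ω | (∀ i j, X ω i j = X ω j i) ∧ ∀ i, X ω i i = false} = 1 ∧
  ∀ (ℓ : Fin n → Bool) (e : Fin n → Fin n → Bool),
    (∀ i j, e i j = e j i) → (∀ i, e i i = false) →
    (ℙ {ω | σ ω = ℓ ∧ X ω = e}).toReal =
      (1 / 2 : ℝ) ^ n * ∏ i : Fin n, ∏ j : Fin n,
        (if i < j then
          (if e i j then (if ℓ i = ℓ j then p else q)
           else 1 - (if ℓ i = ℓ j then p else q))
         else 1)

/-- The balance event `H`: both communities have size in `[n/2 − n^{3/4}, n/2 + n^{3/4}]`. -/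
def balanced {Ω : Type} (n : ℕ) (σ : Ω → Fin n → Bool) : Set Ω :=
  {ω | ((n : ℝ) / 2 - (n : ℝ) ^ ((3 : ℝ) / 4)
          ≤ (Set.ncard {i : Fin n | σ ω i = true} : ℝ) ∧
        (Set.ncard {i : Fin n | σ ω i = true} : ℝ)
          ≤ (n : ℝ) / 2 + (n : ℝ) ^ ((3 : ℝ) / 4)) ∧
       ((n : ℝ) / 2 - (n : ℝ) ^ ((3 : ℝ) / 4)
          ≤ (Set.ncard {i : Fin n | σ ω i = false} : ℝ) ∧
        (Set.ncard {i : Fin n | σ ω i = false} : ℝ)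
          ≤ (n : ℝ) / 2 + (n : ℝ) ^ ((3 : ℝ) / 4))}

section BernoulliProduct

variable {ι : Type*} [DecidableEq ι]

lemma prod_ite_mem_le_exp {r : ι → ℝ} {γ : ℝ} (hr0 : ∀ y, 0 ≤ r y) (hr1 : ∀ y, r y ≤ 1) (hrγ : ∀ y, r y ≤ γ)
    {A T : Finset ι} (hTA : T ⊆ A) :
    ∏ y ∈ A, (if y ∈ T then r y else 1 - r y)
      ≤ γ ^ #T * Real.exp (#T * γ - ∑ y ∈ A, r y) := by
  rw [← prod_sdiff hTA, mul_comm]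
  have hT : ∏ y ∈ T, (if y ∈ T then r y else 1 - r y) ≤ γ ^ #T := by
    rw [← prod_const]
    exact prod_le_prod (fun y hy => by simp [hy, hr0]) (fun y hy => by simp [hy, hrγ])
  -- `1 - x ≤ exp (-x)` on the complement, and the mass of `r` on `T` is at most `#T * γ`
  have hsdiff : ∏ y ∈ A \ T, (if y ∈ T then r y else 1 - r y)
      ≤ Real.exp (#T * γ - ∑ y ∈ A, r y) := by
    calc ∏ y ∈ A \ T, (if y ∈ T then r y else 1 - r y)
        ≤ ∏ y ∈ A \ T, Real.exp (-r y) := by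
          refine prod_le_prod (fun y hy => ?_) (fun y hy => ?_) <;>
            simp only [(mem_sdiff.mp hy).2, if_false]
          · linarith [hr1 y]
          · linarith [Real.add_one_le_exp (-r y)]
      _ = Real.exp (∑ y ∈ T, r y - ∑ y ∈ A, r y) := by
          rw [← Real.exp_sum, sum_neg_distrib, sum_sdiff_eq_sub hTA, neg_sub]
      _ ≤ Real.exp (#T * γ - ∑ y ∈ A, r y) := by
          gcongr
          simpa using sum_le_sum fun y (_ : y ∈ T) => hrγ y
  exact mul_le_mul hT hsdiff (prod_nonneg fun y hy => by simp [(mem_sdiff.mp hy).2, hr1])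
    ((prod_nonneg fun y hy => by simp [hy, hr0]).trans hT)

variable [Fintype ι]

def bernoulliProd (r : ι → ℝ) (g : ι → Bool) : ℝ :=
  ∏ y, if g y then r y else 1 - r y

lemma sum_ite_forall_mem_mul_bernoulliProd (r : ι → ℝ) (A T : Finset ι) :
    ∑ g, (if ∀ y ∈ A, g y = decide (y ∈ T) then (1 : ℝ) else 0) * bernoulliProd r g
      = ∏ y ∈ A, if y ∈ T then r y else 1 - r y := by
  let t : ι → Finset Bool := fun y => if y ∈ A then {decide (y ∈ T)} else univ
  have hpi : Fintype.piFinset t = univ.filter fun g => ∀ y ∈ A, g y = decide (y ∈ T) := by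
    ext g
    simp only [Fintype.mem_piFinset, mem_filter, mem_univ, true_and, t]
    refine forall_congr' fun y => ?_
    split_ifs with hy <;> simp [hy]
  have hfactor : ∀ y, ∑ b ∈ t y, (if b then r y else 1 - r y)
      = if y ∈ A then (if y ∈ T then r y else 1 - r y) else 1 := by
    intro y
    by_cases hy : y ∈ A
    · by_cases hT : y ∈ T <;> simp [t, hy, hT]
    · simp [t, hy]
  simp_rw [ite_mul, one_mul, zero_mul]
  rw [← sum_filter, ← hpi]
  simp only [bernoulliProd]
  rw [← prod_univ_sum t fun y b => if b then r y else 1 - r y]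
  simp_rw [hfactor]
  rw [prod_ite_mem, univ_inter]

lemma ite_card_filter_le_eq_sum (A : Finset ι) (g : ι → Bool) (k : ℕ) :
    (if #(A.filter fun y => g y = true) ≤ k then (1 : ℝ) else 0)
      = ∑ s ∈ range (k + 1), ∑ T ∈ powersetCard s A,
          if ∀ y ∈ A, g y = decide (y ∈ T) then 1 else 0 := by
  have hiff : ∀ s, ∀ T ∈ powersetCard s A,
      (∀ y ∈ A, g y = decide (y ∈ T)) ↔ A.filter (fun y => g y = true) = T := by
    intro s T hT
    have hTA := (mem_powersetCard.mp hT).1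
    constructor
    · intro h
      ext y
      by_cases hy : y ∈ A
      · simp [hy, h y hy]
      · simpa [hy] using fun h => hy (hTA h)
    · rintro rfl y hy
      simp [hy]
  have hinner : ∀ s, ∑ T ∈ powersetCard s A,
      (if ∀ y ∈ A, g y = decide (y ∈ T) then (1 : ℝ) else 0)
        = if #(A.filter fun y => g y = true) = s then 1 else 0 := by
    intro s
    rw [sum_congr rfl fun T hT => if_congr (hiff s T hT) rfl rfl, sum_ite_eq]
    simp [mem_powersetCard, filter_subset]
  simp_rw [hinner, sum_ite_eq, mem_range, Nat.lt_succ_iff]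

lemma sum_ite_card_filter_le_mul_bernoulliProd (r : ι → ℝ) (A : Finset ι) (k : ℕ) :
    ∑ g, (if #(A.filter fun y => g y = true) ≤ k then (1 : ℝ) else 0) * bernoulliProd r g
      = ∑ s ∈ range (k + 1), ∑ T ∈ powersetCard s A,
          ∏ y ∈ A, if y ∈ T then r y else 1 - r y := by
  simp_rw [ite_card_filter_le_eq_sum, sum_mul]
  rw [sum_comm]
  refine sum_congr rfl fun s _ => ?_
  rw [sum_comm]
  exact sum_congr rfl fun T _ => sum_ite_forall_mem_mul_bernoulliProd r A T

lemma sum_ite_card_filter_le_mul_bernoulliProd_le {r : ι → ℝ} {γ : ℝ} (hr0 : ∀ y, 0 ≤ r y)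
    (hr1 : ∀ y, r y ≤ 1) (hrγ : ∀ y, r y ≤ γ) {A : Finset ι} {N : ℕ} (hA : #A ≤ N)
    (hN : 1 ≤ N * γ) (k : ℕ) :
    ∑ g, (if #(A.filter fun y => g y = true) ≤ k then (1 : ℝ) else 0) * bernoulliProd r g
      ≤ (k + 1) * (N * γ) ^ k * Real.exp (k * γ - ∑ y ∈ A, r y) := by
  have hγ : 0 < γ := pos_of_mul_pos_right (one_pos.trans_le hN) (Nat.cast_nonneg N)
  have hterm : ∀ s ∈ range (k + 1), ∑ T ∈ powersetCard s A,
      ∏ y ∈ A, (if y ∈ T then r y else 1 - r y)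
        ≤ (N * γ) ^ k * Real.exp (k * γ - ∑ y ∈ A, r y) := by
    intro s hs
    have hsk : s ≤ k := Nat.lt_succ_iff.mp (mem_range.mp hs)
    have hchoose : ((#A).choose s : ℝ) ≤ (N : ℝ) ^ s := by
      exact_mod_cast (Nat.choose_le_pow _ s).trans (Nat.pow_le_pow_left hA s)
    calc ∑ T ∈ powersetCard s A, ∏ y ∈ A, (if y ∈ T then r y else 1 - r y)
        ≤ ∑ T ∈ powersetCard s A, γ ^ s * Real.exp (k * γ - ∑ y ∈ A, r y) := by
          refine sum_le_sum fun T hT => ?_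
          obtain ⟨hTA, hTs⟩ := mem_powersetCard.mp hT
          refine (prod_ite_mem_le_exp hr0 hr1 hrγ hTA).trans ?_
          rw [hTs]
          gcongr
      _ = (#A).choose s * (γ ^ s * Real.exp (k * γ - ∑ y ∈ A, r y)) := by
          rw [sum_const, card_powersetCard, nsmul_eq_mul]
      _ ≤ (N * γ) ^ s * Real.exp (k * γ - ∑ y ∈ A, r y) := by
          rw [mul_pow, mul_assoc]
          gcongr
      _ ≤ (N * γ) ^ k * Real.exp (k * γ - ∑ y ∈ A, r y) := by
          gcongr
  rw [sum_ite_card_filter_le_mul_bernoulliProd]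
  refine (sum_le_card_nsmul _ _ _ hterm).trans_eq ?_
  rw [card_range, nsmul_eq_mul]
  push_cast
  ring

end BernoulliProduct

lemma integral_comp_eq_sum_measureReal {Ω α : Type*} [MeasurableSpace Ω] [Fintype α]
    [MeasurableSpace α] [MeasurableSingletonClass α] (μ : Measure Ω) [IsFiniteMeasure μ]
    {Z : Ω → α} (hZ : ∀ a, MeasurableSet (Z ⁻¹' {a})) (F : α → ℝ) :
    ∫ ω, F (Z ω) ∂μ = ∑ a, μ.real (Z ⁻¹' {a}) * F a := by
  have hZm : Measurable Z := measurable_to_countable' hZ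
  rw [← integral_map hZm.aemeasurable Integrable.of_finite.aestronglyMeasurable,
    integral_fintype Integrable.of_finite]
  simp [map_measureReal_apply hZm (measurableSet_singleton _)]

namespace SBM

variable {n : ℕ}

/-- A graph on `Fin n` is encoded by its edge indicators `g : Pair n → Bool` on the pairs
`i < j`; `toAdj g` is the corresponding symmetric loopless adjacency matrix. -/
abbrev Pair (n : ℕ) := {x : Fin n × Fin n // x.1 < x.2}

def toAdj (g : Pair n → Bool) (a b : Fin n) : Bool :=
  if h : a < b then g ⟨(a, b), h⟩ else if h : b < a then g ⟨(b, a), h⟩ else false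

def symmAdj (n : ℕ) : Finset (Fin n → Fin n → Bool) :=
  univ.filter fun e => (∀ i j, e i j = e j i) ∧ ∀ i, e i i = false

lemma toAdj_symm (g : Pair n → Bool) (a b : Fin n) : toAdj g a b = toAdj g b a := by
  rcases lt_trichotomy a b with h | rfl | h
  · simp [toAdj, h, h.not_gt]
  · rfl
  · simp [toAdj, h, h.not_gt]

lemma toAdj_self (g : Pair n → Bool) (a : Fin n) : toAdj g a a = false := by
  simp [toAdj]

lemma toAdj_mem_symmAdj (g : Pair n → Bool) : toAdj g ∈ symmAdj n := by
  simp [symmAdj, toAdj_symm g, toAdj_self]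

lemma sum_symmAdj {M : Type*} [AddCommMonoid M] (F : (Fin n → Fin n → Bool) → M) :
    ∑ e ∈ symmAdj n, F e = ∑ g : Pair n → Bool, F (toAdj g) := by
  refine (sum_nbij' toAdj (fun e y => e y.1.1 y.1.2) (fun g _ => toAdj_mem_symmAdj g)
    (fun _ _ => mem_univ _) (fun g _ => ?_) (fun e he => ?_) fun _ _ => rfl).symm
  · funext y
    simp [toAdj, y.2]
  · obtain ⟨hsymm, hloop⟩ := (mem_filter.mp he).2
    funext a b
    rcases lt_trichotomy a b with h | rfl | h
    · simp [toAdj, h]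
    · simp [toAdj, hloop]
    · simp [toAdj, h, h.not_gt, hsymm a b]

lemma prod_ite_lt_eq_prod_pair {M : Type*} [CommMonoid M] (f : Fin n → Fin n → M) :
    ∏ i, ∏ j, (if i < j then f i j else 1) = ∏ y : Pair n, f y.1.1 y.1.2 := by
  rw [← prod_product', ← prod_filter, ← prod_subtype_eq_prod_filter, univ_product_univ, subtype_univ]

def edgeProb (p q : ℝ) (ℓ : Fin n → Bool) (y : Pair n) : ℝ :=
  if ℓ y.1.1 = ℓ y.1.2 then p else q

lemma prod_sbm_toAdj (p q : ℝ) (ℓ : Fin n → Bool) (g : Pair n → Bool) :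
    ∏ i, ∏ j, (if i < j then
        (if toAdj g i j then (if ℓ i = ℓ j then p else q) else 1 - (if ℓ i = ℓ j then p else q))
        else 1)
      = bernoulliProd (edgeProb p q ℓ) g := by
  rw [prod_ite_lt_eq_prod_pair]
  refine prod_congr rfl fun y _ => ?_
  simp [toAdj, edgeProb, y.2]

def star (i : Fin n) : Finset (Pair n) :=
  univ.filter fun y => y.1.1 = i ∨ y.1.2 = i

def other (i : Fin n) (y : Pair n) : Fin n :=
  if y.1.1 = i then y.1.2 else y.1.1

lemma sum_star {M : Type*} [AddCommMonoid M] (i : Fin n) (f : Fin n → M) :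
    ∑ y ∈ star i, f (other i y) = ∑ j ∈ univ.erase i, f j := by
  refine sum_nbij (other i) ?_ ?_ ?_ fun _ _ => rfl
  · intro y hy
    simp only [star, mem_filter, mem_univ, true_and] at hy
    simp only [other, mem_erase, mem_univ, and_true]
    have := y.2
    split_ifs <;> grind
  · intro y hy y' hy' h
    simp only [star, coe_filter, mem_univ, true_and] at hy hy'
    have := y.2
    have := y'.2
    simp only [other] at h
    apply Subtype.ext
    apply Prod.ext <;> split_ifs at h <;> grind
  · intro j hj
    have hji : j ≠ i := (mem_erase.mp hj).1
    rcases hji.lt_or_gt with h | h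
    · exact ⟨⟨(j, i), h⟩, by simp [star], by simp [other, h.ne]⟩
    · exact ⟨⟨(i, j), h⟩, by simp [star], by simp [other]⟩

lemma card_star (i : Fin n) : #(star i) = n - 1 := by
  rw [card_eq_sum_ones, sum_star i fun _ => 1]
  simp

lemma toAdj_other {g : Pair n → Bool} {i : Fin n} {y : Pair n} (hy : y ∈ star i) :
    toAdj g i (other i y) = g y := by
  have := y.2
  simp only [star, mem_filter, mem_univ, true_and] at hy
  rcases hy with rfl | rfl
  · simp [other, toAdj, this]
  · simp [other, toAdj, this, this.ne, this.not_gt]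

lemma card_filter_toAdj (g : Pair n → Bool) (i : Fin n) :
    #(univ.filter fun j => toAdj g i j = true) = #((star i).filter fun y => g y = true) := by
  simp only [card_filter]
  calc ∑ j, (if toAdj g i j then 1 else 0)
      = ∑ j ∈ univ.erase i, if toAdj g i j then 1 else 0 :=
        (sum_erase _ (by simp [toAdj_self])).symm
    _ = ∑ y ∈ star i, if toAdj g i (other i y) then 1 else 0 := (sum_star i _).symm
    _ = ∑ y ∈ star i, if g y then 1 else 0 := sum_congr rfl fun y hy => by rw [toAdj_other hy]

lemma sum_star_edgeProb (p q : ℝ) (ℓ : Fin n → Bool) (i : Fin n) :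
    ∑ y ∈ star i, edgeProb p q ℓ y = ∑ j ∈ univ.erase i, if ℓ j = ℓ i then p else q := by
  rw [← sum_star i fun j => if ℓ j = ℓ i then p else q]
  refine sum_congr rfl fun y hy => ?_
  have := y.2
  simp only [star, mem_filter, mem_univ, true_and] at hy
  rcases hy with rfl | rfl
  · simp [other, edgeProb, eq_comm]
  · simp [other, edgeProb, this.ne]

lemma sub_le_sum_star_edgeProb {p q : ℝ} (hp : 0 ≤ p) (hq : 0 ≤ q) {ℓ : Fin n → Bool} {i : Fin n}
    {L : ℝ} (hsame : L ≤ #(univ.filter fun j => ℓ j = ℓ i))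
    (hdiff : L ≤ #(univ.filter fun j => ¬ℓ j = ℓ i)) :
    (p + q) * L - p ≤ ∑ y ∈ star i, edgeProb p q ℓ y := by
  rw [sum_star_edgeProb, sum_erase_eq_sub (mem_univ i), sum_ite, sum_const, sum_const,
    nsmul_eq_mul, nsmul_eq_mul, if_pos rfl]
  nlinarith [mul_le_mul_of_nonneg_left hsame hp, mul_le_mul_of_nonneg_left hdiff hq]

lemma sum_ite_degree_le_mul_bernoulliProd_le {p q : ℝ} (hp0 : 0 ≤ p) (hq0 : 0 ≤ q)
    (hp1 : p ≤ 1) (hq1 : q ≤ 1) (hn : 1 ≤ n * max p q) {ℓ : Fin n → Bool} {i : Fin n} {L : ℝ}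
    (hsame : L ≤ #(univ.filter fun j => ℓ j = ℓ i))
    (hdiff : L ≤ #(univ.filter fun j => ¬ℓ j = ℓ i)) (k : ℕ) :
    ∑ g, (if #(univ.filter fun j => toAdj g i j = true) ≤ k then (1 : ℝ) else 0)
        * bernoulliProd (edgeProb p q ℓ) g
      ≤ (k + 1) * (n * max p q) ^ k * Real.exp ((k + 1) * max p q - (p + q) * L) := by
  have hr0 : ∀ y, 0 ≤ edgeProb p q ℓ y := fun y => by unfold edgeProb; split_ifs <;> assumption
  have hr1 : ∀ y, edgeProb p q ℓ y ≤ 1 := fun y => by unfold edgeProb; split_ifs <;> assumption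
  have hrγ : ∀ y, edgeProb p q ℓ y ≤ max p q := fun y => by
    unfold edgeProb; split_ifs
    exacts [le_max_left p q, le_max_right p q]
  simp_rw [card_filter_toAdj]
  refine (sum_ite_card_filter_le_mul_bernoulliProd_le hr0 hr1 hrγ
    ((card_star i).trans_le (Nat.sub_le n 1)) hn k).trans ?_
  have hnγ : 0 ≤ n * max p q := zero_le_one.trans hn
  refine mul_le_mul_of_nonneg_left (Real.exp_le_exp.mpr ?_) (by positivity)
  linarith [sub_le_sum_star_edgeProb hp0 hq0 hsame hdiff, le_max_left p q]

lemma le_card_filter_of_mem_balanced {ℓ : Fin n → Bool} (hℓ : ℓ ∈ balanced n id) (i : Fin n) :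
    (n : ℝ) / 2 - (n : ℝ) ^ ((3 : ℝ) / 4) ≤ #(univ.filter fun j => ℓ j = ℓ i) ∧
      (n : ℝ) / 2 - (n : ℝ) ^ ((3 : ℝ) / 4) ≤ #(univ.filter fun j => ¬ℓ j = ℓ i) := by
  obtain ⟨⟨ht, -⟩, ⟨hf, -⟩⟩ := hℓ
  simp only [id, Set.ncard_eq_toFinset_card', Set.toFinset_ofPred] at ht hf
  cases ℓ i
  · simpa only [Bool.not_eq_false] using ⟨hf, ht⟩
  · simpa only [Bool.not_eq_true] using ⟨ht, hf⟩

variable {Ω : Type} [MeasurableSpace Ω] {μ : Measure Ω} [IsProbabilityMeasure μ]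
  {σ : Ω → Fin n → Bool} {X : Ω → Fin n → Fin n → Bool}

lemma measure_eq_zero_of_notMem_symmAdj
    (hgood : μ {ω | (∀ i j, X ω i j = X ω j i) ∧ ∀ i, X ω i i = false} = 1)
    (hmeas : ∀ ℓ e, MeasurableSet {ω | σ ω = ℓ ∧ X ω = e}) (ℓ : Fin n → Bool)
    {e : Fin n → Fin n → Bool} (he : e ∉ symmAdj n) :
    μ {ω | σ ω = ℓ ∧ X ω = e} = 0 := by
  have hdisj : Disjoint {ω | (∀ i j, X ω i j = X ω j i) ∧ ∀ i, X ω i i = false}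
      {ω | σ ω = ℓ ∧ X ω = e} :=
    Set.disjoint_left.mpr fun ω hω hωe => he (by simpa [symmAdj, hωe.2] using hω)
  have h : μ ({ω | (∀ i j, X ω i j = X ω j i) ∧ ∀ i, X ω i i = false}
      ∪ {ω | σ ω = ℓ ∧ X ω = e}) ≤ 1 := prob_le_one
  rw [measure_union hdisj (hmeas ℓ e), hgood] at h
  exact le_zero_iff.mp (ENNReal.le_of_add_le_add_left ENNReal.one_ne_top (by simpa using h))

lemma integral_eq_sum_bernoulliProd {p q : ℝ} (hsbm : sbmLaw μ n p q σ X)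
    (hmeas : ∀ ℓ e, MeasurableSet {ω | σ ω = ℓ ∧ X ω = e})
    (F : (Fin n → Bool) → (Fin n → Fin n → Bool) → ℝ) :
    ∫ ω, F (σ ω) (X ω) ∂μ
      = (1 / 2) ^ n * ∑ ℓ, ∑ g, bernoulliProd (edgeProb p q ℓ) g * F ℓ (toAdj g) := by
  have hfiber : ∀ z : (Fin n → Bool) × (Fin n → Fin n → Bool),
      (fun ω => (σ ω, X ω)) ⁻¹' {z} = {ω | σ ω = z.1 ∧ X ω = z.2} := fun z => by
    ext ω
    simp [Prod.ext_iff]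
  have hsum := integral_comp_eq_sum_measureReal μ (fun z => hfiber z ▸ hmeas z.1 z.2)
    fun z => F z.1 z.2
  simp only [hfiber, Fintype.sum_prod_type] at hsum
  rw [hsum, mul_sum]
  refine sum_congr rfl fun ℓ _ => ?_
  rw [← sum_subset (subset_univ (symmAdj n)) fun e _ he => by
    simp [measureReal_def, measure_eq_zero_of_notMem_symmAdj hsbm.1 hmeas ℓ he],
    sum_symmAdj, mul_sum]
  refine sum_congr rfl fun g _ => ?_
  rw [measureReal_def, hsbm.2 ℓ (toAdj g) (toAdj_symm g) (toAdj_self g), prod_sbm_toAdj]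
  ring

theorem integral_ncard_degree_le_mul_indicator_balanced_le {p q : ℝ} (hsbm : sbmLaw μ n p q σ X)
    (hmeas : ∀ ℓ e, MeasurableSet {ω | σ ω = ℓ ∧ X ω = e}) (hp0 : 0 ≤ p) (hq0 : 0 ≤ q)
    (hp1 : p ≤ 1) (hq1 : q ≤ 1) (hn : 1 ≤ n * max p q) (k : ℕ) :
    ∫ ω, (Set.ncard {i : Fin n | #(univ.filter fun j => X ω i j = true) ≤ k} : ℝ)
        * Set.indicator (balanced n σ) (fun _ => (1 : ℝ)) ω ∂μ
      ≤ n * ((k + 1) * (n * max p q) ^ k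
          * Real.exp ((k + 1) * max p q - (p + q) * ((n : ℝ) / 2 - (n : ℝ) ^ ((3 : ℝ) / 4)))) := by
  set B := (k + 1) * (n * max p q) ^ k
    * Real.exp ((k + 1) * max p q - (p + q) * ((n : ℝ) / 2 - (n : ℝ) ^ ((3 : ℝ) / 4)))
  have hB : 0 ≤ B := by
    have : 0 ≤ n * max p q := zero_le_one.trans hn
    positivity
  have hlabel : ∀ ℓ, ∑ g, bernoulliProd (edgeProb p q ℓ) g
      * ((Set.ncard {i : Fin n | #(univ.filter fun j => toAdj g i j = true) ≤ k} : ℝ)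
        * Set.indicator (balanced n id) (fun _ => (1 : ℝ)) ℓ) ≤ n * B := by
    intro ℓ
    by_cases hℓ : ℓ ∈ balanced n id
    · simp only [Set.indicator_of_mem hℓ, mul_one, Set.ncard_eq_toFinset_card',
        Set.toFinset_ofPred, natCast_card_filter, mul_sum]
      rw [sum_comm]
      refine (sum_le_card_nsmul _ _ B fun i _ => ?_).trans_eq (by simp)
      obtain ⟨hsame, hdiff⟩ := le_card_filter_of_mem_balanced hℓ i
      simp_rw [mul_comm (bernoulliProd _ _)]
      exact sum_ite_degree_le_mul_bernoulliProd_le hp0 hq0 hp1 hq1 hn hsame hdiff k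
    · simp only [Set.indicator_of_notMem hℓ, mul_zero, sum_const_zero]
      positivity
  refine (integral_eq_sum_bernoulliProd hsbm hmeas fun ℓ e =>
    (Set.ncard {i : Fin n | #(univ.filter fun j => e i j = true) ≤ k} : ℝ)
      * Set.indicator (balanced n id) (fun _ => (1 : ℝ)) ℓ).trans_le ?_
  calc _ ≤ (1 / 2 : ℝ) ^ n * ∑ _ℓ : Fin n → Bool, n * B := by
        gcongr with ℓ
        exact hlabel ℓ
    _ = n * B := by
        rw [sum_const, card_univ, Fintype.card_fun, Fintype.card_bool, Fintype.card_fin,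
          nsmul_eq_mul, ← mul_assoc]
        push_cast
        rw [← mul_pow]
        norm_num

end SBM

open Filter Topology

lemma tendsto_log_div_rpow_natCast {r : ℝ} (hr : 0 < r) :
    Tendsto (fun n : ℕ => Real.log n / (n : ℝ) ^ r) atTop (𝓝 0) :=
  (isLittleO_log_rpow_atTop hr).tendsto_div_nhds_zero.comp tendsto_natCast_atTop_atTop

lemma eventually_mul_exp_le {α β δ : ℝ} (hγ : 0 ≤ max α β) (hδ : 0 < δ) (k : ℕ) :
    ∀ᶠ n : ℕ in atTop, (n : ℝ) * ((k + 1) * (max α β * Real.log n) ^ k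
        * Real.exp ((k + 1) * (max α β * Real.log n / n)
          - (α * Real.log n / n + β * Real.log n / n) * ((n : ℝ) / 2 - (n : ℝ) ^ ((3 : ℝ) / 4))))
      ≤ 2 * ((k : ℝ) + 1) ^ 2 * (max α β * Real.log n / 2) ^ k
          * (n : ℝ) ^ (1 - (α + β) / 2 + δ) := by
  set γ := max α β
  have hε : Tendsto (fun n : ℕ => (k + 1) * γ * (Real.log n / (n : ℝ) ^ (1 : ℝ))
      + (α + β) * (Real.log n / (n : ℝ) ^ ((1 : ℝ) / 4))) atTop (𝓝 0) := by
    simpa using ((tendsto_log_div_rpow_natCast one_pos).const_mul ((k + 1) * γ)).add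
      ((tendsto_log_div_rpow_natCast (by norm_num : (0 : ℝ) < 1 / 4)).const_mul (α + β))
  have hpow : Tendsto (fun n : ℕ => (n : ℝ) ^ δ) atTop atTop :=
    (tendsto_rpow_atTop hδ).comp tendsto_natCast_atTop_atTop
  filter_upwards [hε.eventually (eventually_le_nhds one_pos),
    hpow.eventually_ge_atTop (Real.exp 1 * 2 ^ k), eventually_gt_atTop 0] with n hεn hδn hn
  set ε := (k + 1) * γ * (Real.log n / (n : ℝ) ^ (1 : ℝ))
    + (α + β) * (Real.log n / (n : ℝ) ^ ((1 : ℝ) / 4))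
  have hn' : (0 : ℝ) < n := by exact_mod_cast hn
  have hsplit : (n : ℝ) ^ ((3 : ℝ) / 4) = n / (n : ℝ) ^ ((1 : ℝ) / 4) := by
    rw [eq_div_iff (by positivity), ← Real.rpow_add hn']
    norm_num
  have hexp : (k + 1) * (γ * Real.log n / n)
      - (α * Real.log n / n + β * Real.log n / n) * ((n : ℝ) / 2 - (n : ℝ) ^ ((3 : ℝ) / 4))
        = Real.log n * (-(α + β) / 2) + ε := by
    rw [hsplit]
    simp only [ε, Real.rpow_one]
    field_simp
    ring
  -- `ε → 0`, so `exp ε ≤ e`, and `n ^ δ` eventually absorbs `e * 2 ^ k`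
  have hεδ : Real.exp ε ≤ 2 * (k + 1) * (n : ℝ) ^ δ / 2 ^ k := by
    rw [le_div_iff₀ (by positivity)]
    calc Real.exp ε * 2 ^ k ≤ Real.exp 1 * 2 ^ k := by gcongr
      _ ≤ (n : ℝ) ^ δ := hδn
      _ ≤ 2 * (k + 1) * (n : ℝ) ^ δ :=
          le_mul_of_one_le_left (by positivity) (by linarith [(k.cast_nonneg : (0 : ℝ) ≤ k)])
  have hlog : 0 ≤ Real.log n := Real.log_natCast_nonneg n
  rw [hexp, Real.exp_add, ← Real.rpow_def_of_pos hn',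
    show 1 - (α + β) / 2 + δ = 1 + -(α + β) / 2 + δ by ring, Real.rpow_add hn',
    Real.rpow_add hn', Real.rpow_one, div_pow]
  calc (n : ℝ) * ((k + 1) * (γ * Real.log n) ^ k * ((n : ℝ) ^ (-(α + β) / 2) * Real.exp ε))
      = ((k + 1) * (γ * Real.log n) ^ k * n * (n : ℝ) ^ (-(α + β) / 2)) * Real.exp ε := by ring
    _ ≤ ((k + 1) * (γ * Real.log n) ^ k * n * (n : ℝ) ^ (-(α + β) / 2))
          * (2 * (k + 1) * (n : ℝ) ^ δ / 2 ^ k) := by gcongr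
    _ = 2 * ((k : ℝ) + 1) ^ 2 * ((γ * Real.log n) ^ k / 2 ^ k)
          * ((n : ℝ) * (n : ℝ) ^ (-(α + β) / 2) * (n : ℝ) ^ δ) := by ring

/-- in `SBM(n, α log n/n, β log n/n)`, the expected number of vertices of
degree at most `k`, restricted to the balance event `H`, is at most
`2(k+1)²(γ log n/2)^k n^{1−(α+β)/2+o(1)}` with `γ = max{α,β}`: for every `δ > 0`,
eventually `E[|U|·1(H)] ≤ 2(k+1)²(γ log n/2)^k n^{1−(α+β)/2+δ}`. -/
theorem statement12 (α β : ℝ) (hα : 0 < α) (hβ : 0 < β) (k : ℕ) (δ : ℝ) (hδ : 0 < δ)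
    (Ω : ℕ → Type) [∀ n, MeasurableSpace (Ω n)]
    (ℙ : ∀ n, Measure (Ω n)) (hP : ∀ n, IsProbabilityMeasure (ℙ n))
    (σ : ∀ n, Ω n → Fin n → Bool) (X : ∀ n, Ω n → Fin n → Fin n → Bool)
    (hmeas : ∀ (n : ℕ) (ℓ : Fin n → Bool) (e : Fin n → Fin n → Bool),
      MeasurableSet {ω | σ n ω = ℓ ∧ X n ω = e})
    (hsbm : ∀ n, sbmLaw (ℙ n) n (α * Real.log n / n) (β * Real.log n / n) (σ n) (X n)) :
    ∀ᶠ n : ℕ in Filter.atTop,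
      (∫ ω, (Set.ncard {i : Fin n |
            (Finset.univ.filter (fun j => X n ω i j = true)).card ≤ k} : ℝ)
          * Set.indicator (balanced n (σ n)) (fun _ => (1 : ℝ)) ω ∂(ℙ n))
        ≤ 2 * ((k : ℝ) + 1) ^ 2 * (max α β * Real.log n / 2) ^ k
            * (n : ℝ) ^ (1 - (α + β) / 2 + δ) := by
  have hγ : 0 < max α β := lt_max_of_lt_left hα
  have hlog : Tendsto (fun n : ℕ => max α β * Real.log n) atTop atTop :=
    (Real.tendsto_log_atTop.comp tendsto_natCast_atTop_atTop).const_mul_atTop hγ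
  have hsmall : Tendsto (fun n : ℕ => max α β * (Real.log n / (n : ℝ) ^ (1 : ℝ))) atTop (𝓝 0) := by
    simpa using (tendsto_log_div_rpow_natCast one_pos).const_mul (max α β)
  filter_upwards [hlog.eventually_ge_atTop 1, hsmall.eventually (eventually_le_nhds one_pos),
    eventually_mul_exp_le hγ.le hδ k, eventually_ne_atTop 0] with n hlarge hγ1 hbound hn
  have := hP n
  have hlog0 : 0 ≤ Real.log n := Real.log_natCast_nonneg n
  have hmax : max (α * Real.log n / n) (β * Real.log n / n) = max α β * Real.log n / n := by
    rw [max_div_div_right (Nat.cast_nonneg n), max_mul_of_nonneg _ _ hlog0]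
  have hγn : (n : ℝ) * (max α β * Real.log n / n) = max α β * Real.log n :=
    mul_div_cancel₀ _ (Nat.cast_ne_zero.mpr hn)
  rw [Real.rpow_one, ← mul_div_assoc] at hγ1
  have hp1 : α * Real.log n / n ≤ 1 := (le_max_left _ _).trans (hmax ▸ hγ1)
  have hq1 : β * Real.log n / n ≤ 1 := (le_max_right _ _).trans (hmax ▸ hγ1)
  refine (SBM.integral_ncard_degree_le_mul_indicator_balanced_le (hsbm n) (hmeas n)
    (by positivity) (by positivity) hp1 hq1 (by rwa [hmax, hγn]) k).trans ?_
  rwa [hmax, hγn]
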